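/- For every integer l ≥ 1, the expectation of the number of vertices of G_1^{l+1} with degree l, second degree 2, and no loop satisfies E[N_{l+1}(l,2)] = 2·(l−1)! / (2l+1)!!, where (2l+1)!! = 1·3·5···(2l+1) denotes the double factorial of the odd number 2l+1. -/
import Mathlib


open scoped Classical

/-!
The Bollobás–Riordan random graph `G_1^n` (case `m = 1`), with vertices `0, …, n-1`
(0-indexed).  A realization is encoded by a map `f : ℕ → ℕ`, where for each `t < n`
the graph contains the edge `{t, f t}` (a loop at `t` when `f t = t`); only maps with
`f t ≤ t` get positive probability.  The degree of `s` is then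
`[s < n] + #{u < n : f u = s}` (a loop contributing 2).  The vertex `t` (1-indexed
`t+1`) chooses its neighbor `f t` preferentially: an existing vertex `s < t` with
probability `deg(s)/(2(t+1)-1)` (degree in the current graph on `0, …, t-1`), and
itself (forming a loop) with probability `1/(2(t+1)-1)`.
-/

/-- Probability weight of the choice made when vertex `t` (0-indexed) is added:
it attaches to `f t`. The current degree of a vertex `s < t` in the graph with
edges `{u, f u}`, `u < t`, equals `1 + #{u < t : f u = s}`. -/
noncomputable def brStepWeight (f : ℕ → ℕ) (t : ℕ) : ℝ :=
  (if f t = t then 1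
   else if f t < t then
     (1 + (((Finset.range t).filter (fun u => f u = f t)).card : ℝ))
   else 0) / (2 * (t : ℝ) + 1)

/-- Probability of the realization `f` of `G_1^n`. -/
noncomputable def brProb (n : ℕ) (f : ℕ → ℕ) : ℝ :=
  ∏ t ∈ Finset.range n, brStepWeight f t

/-- Extend a finitary configuration to a map `ℕ → ℕ`. -/
def brExt (n : ℕ) (f : Fin n → Fin n) : ℕ → ℕ :=
  fun t => if h : t < n then (f ⟨t, h⟩ : ℕ) else 0

/-- Expectation of a functional `g` of the random graph `G_1^n`. -/
noncomputable def brExpect (n : ℕ) (g : (ℕ → ℕ) → ℝ) : ℝ :=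
  ∑ f : Fin n → Fin n, brProb n (brExt n f) * g (brExt n f)

/-- Probability of an event `A` for the random graph `G_1^n`. -/
noncomputable def brProbEvent (n : ℕ) (A : (ℕ → ℕ) → Prop) : ℝ :=
  brExpect n (fun f => if A f then 1 else 0)

/-- Degree of the vertex `s` in `G_1^n` (a loop contributes 2). -/
def brDeg (n : ℕ) (f : ℕ → ℕ) (s : ℕ) : ℕ :=
  (if s < n then 1 else 0) + ((Finset.range n).filter (fun u => f u = s)).card

/-- `a` and `b` are joined by an edge of `G_1^n`. -/
def brAdj (n : ℕ) (f : ℕ → ℕ) (a b : ℕ) : Prop :=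
  ∃ u ∈ Finset.range n, (u = a ∧ f u = b) ∨ (u = b ∧ f u = a)

/-- Second degree of the vertex `t` in `G_1^n`: the number of edges `ij` with
`i ≠ t`, `j ≠ t`, `it ∈ G_1^n`, `ij ∈ G_1^n` — i.e. the number of edges adjacent to
neighbors of `t`, excluding the edges adjacent to `t` itself.  In this multigraph
count, each edge `ij` (with indeterminate `i`, `j`) is counted once for each of its
endpoints that is a neighbor of `t`; in particular a loop at a neighbor of `t`
contributes `2`, so that `d_2(t) = Σ_{u ~ t, u ≠ t} d(u) − (d(t) − 2·#loops at t)`,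
as used throughout the paper (e.g. a vertex of degree `1` with neighbor `q` has
second degree `d(q) − 1`). -/
noncomputable def brD2 (n : ℕ) (f : ℕ → ℕ) (t : ℕ) : ℕ :=
  ∑ v ∈ Finset.range n,
    ((if v ≠ t ∧ f v ≠ t ∧ brAdj n f v t then 1 else 0) +
     (if v ≠ t ∧ f v ≠ t ∧ brAdj n f (f v) t then 1 else 0))

/-- `X_n(k)`: the number of vertices of `G_1^n` with second degree `k`. -/
noncomputable def brX (n k : ℕ) (f : ℕ → ℕ) : ℕ :=
  ((Finset.range n).filter (fun t => brD2 n f t = k)).card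

/-- `N_n(l,k)`: the number of vertices of `G_1^n` with degree `l`, second degree `k`,
and no loop. -/
noncomputable def brNcount (n l k : ℕ) (f : ℕ → ℕ) : ℕ :=
  ((Finset.range n).filter
    (fun t => brDeg n f t = l ∧ brD2 n f t = k ∧ f t ≠ t)).card

/-- `P_n(l,k)`: the number of vertices of `G_1^n` with a loop, degree `l`, and
second degree `k`. -/
noncomputable def brPcount (n l k : ℕ) (f : ℕ → ℕ) : ℕ :=
  ((Finset.range n).filter
    (fun t => brDeg n f t = l ∧ brD2 n f t = k ∧ f t = t)).card

/-- `M_n^2(k)`: the expected number of vertices of `G_1^n` with second degree `k`. -/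
noncomputable def M2 (n k : ℕ) : ℝ := brExpect n (fun f => (brX n k f : ℝ))

/-- `M_n^1(d)`: the expected number of vertices of `G_1^n` with degree `d`. -/
noncomputable def M1 (n d : ℕ) : ℝ :=
  brExpect n (fun f => (((Finset.range n).filter (fun t => brDeg n f t = d)).card : ℝ))

/-- `E[N_n(l,k)]`. -/
noncomputable def EN (n l k : ℕ) : ℝ := brExpect n (fun f => (brNcount n l k f : ℝ))

/-- `E[P_n(l,k)]`. -/
noncomputable def EP (n l k : ℕ) : ℝ := brExpect n (fun f => (brPcount n l k f : ℝ))


/-- The unique configuration giving a vertex of degree `l` without loop. -/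
def brG (l : ℕ) : ℕ → ℕ := fun u => if u ≤ 1 then 0 else if u ≤ l then 1 else 0

def brFstar (l : ℕ) : Fin (l+1) → Fin (l+1) :=
  fun u => ⟨brG l u, by unfold brG; split_ifs <;> omega⟩

lemma brExt_brFstar (l : ℕ) : brExt (l+1) (brFstar l) = brG l := by
  funext t
  unfold brExt brFstar
  by_cases h : t < l + 1
  · rw [dif_pos h]
  · rw [dif_neg h]
    unfold brG
    split_ifs <;> omega

lemma brDeg_eq (n : ℕ) (g : ℕ → ℕ) (t : ℕ) (ht : t < n) :
    brDeg n g t = 1 + ((Finset.range n).filter (fun u => g u = t)).card := by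
  unfold brDeg; rw [if_pos ht]

lemma lemB {l : ℕ} (hl : 1 ≤ l) {g : ℕ → ℕ} (hle : ∀ t, t < l + 1 → g t ≤ t)
    {t : ℕ} (ht : t < l + 1) (hnl : g t ≠ t) (hdeg : brDeg (l+1) g t = l) :
    t = 1 ∧ g 0 = 0 ∧ g 1 = 0 ∧ ∀ u, 2 ≤ u → u < l + 1 → g u = 1 := by
  have hg0 : g 0 = 0 := Nat.le_zero.mp (hle 0 (by omega))
  rw [brDeg_eq _ _ _ ht] at hdeg
  set F := (Finset.range (l+1)).filter (fun u => g u = t) with hF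
  have hsub : F ⊆ Finset.Ico (t+1) (l+1) := by
    intro u hu
    rw [hF, Finset.mem_filter, Finset.mem_range] at hu
    rw [Finset.mem_Ico]
    have h1 : g u ≤ u := hle u hu.1
    have h2 : u ≠ t := by rintro rfl; exact hnl hu.2
    have h3 := hu.2
    omega
  have hcard2 : (Finset.Ico (t+1) (l+1)).card = l - t := by
    rw [Nat.card_Ico]; omega
  have hcc := Finset.card_le_card hsub
  have ht1 : t = 1 := by
    rcases Nat.lt_or_ge t 1 with h | h
    · exfalso
      have : t = 0 := by omega
      subst this
      exact hnl hg0
    · omega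
  subst ht1
  have heq : F = Finset.Ico 2 (l+1) := by
    apply Finset.eq_of_subset_of_card_le hsub
    omega
  refine ⟨rfl, hg0, ?_, ?_⟩
  · have := hle 1 (by omega); omega
  · intro u h2 hu
    have : u ∈ F := by rw [heq, Finset.mem_Ico]; omega
    rw [hF, Finset.mem_filter] at this
    exact this.2

lemma hleG (l : ℕ) : ∀ t, t < l + 1 → brG l t ≤ t := by
  intro t _; unfold brG; split_ifs <;> omega

lemma prodNum (l : ℕ) (hl : 1 ≤ l) :
    ∏ t ∈ Finset.Ico 2 (l+1), ((t:ℝ) - 1) = ((l-1).factorial : ℝ) := by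
  induction l with
  | zero => omega
  | succ m ih =>
    rcases Nat.lt_or_ge m 1 with h | h
    · have : m = 0 := by omega
      subst this
      simp
    · rw [Finset.prod_Ico_succ_top (by omega : 2 ≤ m+1)]
      rw [ih h]
      have h1 : (m + 1 : ℕ) - 1 = m := rfl
      rw [h1]
      have h2 : m.factorial = m * (m-1).factorial := by
        conv_lhs => rw [show m = (m-1)+1 by omega]
        rw [Nat.factorial_succ]
        congr 2
        omega
      rw [h2]
      push_cast
      ring

lemma prodDen (l : ℕ) (hl : 1 ≤ l) :
    3 * ∏ t ∈ Finset.Ico 2 (l+1), (2*(t:ℝ) + 1) = ((2*l+1).doubleFactorial : ℝ) := by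
  induction l with
  | zero => omega
  | succ m ih =>
    rcases Nat.lt_or_ge m 1 with h | h
    · have : m = 0 := by omega
      subst this
      norm_num [Nat.doubleFactorial]
    · rw [Finset.prod_Ico_succ_top (by omega : 2 ≤ m+1)]
      have h3 : 2*(m+1)+1 = (2*m+1) + 2 := by ring
      rw [h3, Nat.doubleFactorial_add_two]
      push_cast
      rw [← ih h]
      ring

lemma stepG0 (l : ℕ) : brStepWeight (brG l) 0 = 1 := by
  unfold brStepWeight brG
  norm_num

lemma stepG1 (l : ℕ) (hl : 1 ≤ l) : brStepWeight (brG l) 1 = 2/3 := by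
  unfold brStepWeight
  have h1 : brG l 1 = 0 := by unfold brG; simp
  rw [h1]
  rw [if_neg (by omega), if_pos (by omega)]
  have h2 : (Finset.range 1).filter (fun u => brG l u = 0) = {0} := by
    ext u
    simp only [Finset.mem_filter, Finset.mem_range, Finset.mem_singleton]
    constructor
    · rintro ⟨h, _⟩; omega
    · rintro rfl; exact ⟨by omega, by unfold brG; simp⟩
  rw [h2]
  norm_num

lemma stepGmid (l t : ℕ) (h2 : 2 ≤ t) (htl : t ≤ l) :
    brStepWeight (brG l) t = ((t:ℝ) - 1)/(2*(t:ℝ)+1) := by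
  unfold brStepWeight
  have hGt : brG l t = 1 := by unfold brG; rw [if_neg (by omega), if_pos htl]
  rw [hGt, if_neg (by omega), if_pos (by omega)]
  have hfil : (Finset.range t).filter (fun u => brG l u = 1) = Finset.Ico 2 t := by
    ext u
    simp only [Finset.mem_filter, Finset.mem_range, Finset.mem_Ico]
    constructor
    · rintro ⟨h, hg⟩
      unfold brG at hg
      split_ifs at hg <;> omega
    · rintro ⟨ha, hb⟩
      refine ⟨hb, ?_⟩
      unfold brG
      rw [if_neg (by omega), if_pos (by omega)]
  rw [hfil, Nat.card_Ico]
  have : ((t - 2 : ℕ) : ℝ) = (t:ℝ) - 2 := by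
    push_cast [h2]
    ring
  rw [this]
  ring_nf

lemma range_split (l : ℕ) (hl : 1 ≤ l) :
    Finset.range (l+1) = insert 0 (insert 1 (Finset.Ico 2 (l+1))) := by
  ext u
  simp only [Finset.mem_range, Finset.mem_insert, Finset.mem_Ico]
  omega

lemma prob_star (l : ℕ) (hl : 1 ≤ l) :
    brProb (l+1) (brG l) =
      2 * ((l - 1).factorial : ℝ) / (Nat.doubleFactorial (2 * l + 1) : ℝ) := by
  unfold brProb
  rw [range_split l hl]
  rw [Finset.prod_insert (by simp only [Finset.mem_insert, Finset.mem_Ico]; omega),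
      Finset.prod_insert (by simp only [Finset.mem_Ico]; omega)]
  rw [stepG0, stepG1 l hl]
  have hmid : ∀ t ∈ Finset.Ico 2 (l+1),
      brStepWeight (brG l) t = ((t:ℝ) - 1)/(2*(t:ℝ)+1) := by
    intro t ht
    rw [Finset.mem_Ico] at ht
    exact stepGmid l t ht.1 (by omega)
  rw [Finset.prod_congr rfl hmid]
  rw [Finset.prod_div_distrib, prodNum l hl]
  have hd := prodDen l hl
  have hpos : (0:ℝ) < ((2*l+1).doubleFactorial : ℝ) := by
    exact_mod_cast (2*l+1).doubleFactorial_pos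
  have hDpos : (0:ℝ) < ∏ t ∈ Finset.Ico 2 (l+1), (2*(t:ℝ) + 1) := by
    apply Finset.prod_pos
    intro i hi
    rw [Finset.mem_Ico] at hi
    have : (2:ℝ) ≤ (i:ℝ) := by exact_mod_cast hi.1
    linarith
  rw [show (Nat.doubleFactorial (2*l+1) : ℝ) = ((2*l+1).doubleFactorial : ℝ) from rfl]
  rw [← hd]
  field_simp

lemma adjG01 (l : ℕ) (hl : 1 ≤ l) : brAdj (l+1) (brG l) 0 1 := by
  refine ⟨1, Finset.mem_range.mpr (by omega), Or.inr ⟨rfl, ?_⟩⟩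
  unfold brG; simp

lemma degG1 (l : ℕ) (hl : 1 ≤ l) : brDeg (l+1) (brG l) 1 = l := by
  rw [brDeg_eq _ _ _ (by omega)]
  have hfil : (Finset.range (l+1)).filter (fun u => brG l u = 1) = Finset.Ico 2 (l+1) := by
    ext u
    simp only [Finset.mem_filter, Finset.mem_range, Finset.mem_Ico]
    constructor
    · rintro ⟨h, hg⟩
      unfold brG at hg
      split_ifs at hg <;> omega
    · rintro ⟨ha, hb⟩
      refine ⟨hb, ?_⟩
      unfold brG
      rw [if_neg (by omega), if_pos (by omega)]
  rw [hfil, Nat.card_Ico]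
  omega

lemma d2G1 (l : ℕ) (hl : 1 ≤ l) : brD2 (l+1) (brG l) 1 = 2 := by
  unfold brD2
  rw [range_split l hl]
  rw [Finset.sum_insert (by simp only [Finset.mem_insert, Finset.mem_Ico]; omega),
      Finset.sum_insert (by simp only [Finset.mem_Ico]; omega)]
  have hG0 : brG l 0 = 0 := by unfold brG; simp
  have hG1 : brG l 1 = 0 := by unfold brG; simp
  have hadj := adjG01 l hl
  have hterm0 : ((if (0:ℕ) ≠ 1 ∧ brG l 0 ≠ 1 ∧ brAdj (l+1) (brG l) 0 1 then 1 else 0) +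
      (if (0:ℕ) ≠ 1 ∧ brG l 0 ≠ 1 ∧ brAdj (l+1) (brG l) (brG l 0) 1 then 1 else 0)) = 2 := by
    rw [hG0]
    rw [if_pos (⟨by omega, by omega, hadj⟩ :
      (0:ℕ) ≠ 1 ∧ (0:ℕ) ≠ 1 ∧ brAdj (l+1) (brG l) 0 1)]
  have hterm1 : ((if (1:ℕ) ≠ 1 ∧ brG l 1 ≠ 1 ∧ brAdj (l+1) (brG l) 1 1 then 1 else 0) +
      (if (1:ℕ) ≠ 1 ∧ brG l 1 ≠ 1 ∧ brAdj (l+1) (brG l) (brG l 1) 1 then 1 else 0)) = 0 := by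
    rw [if_neg (fun h => h.1 rfl), if_neg (fun h => h.1 rfl)]
  have hsum : ∑ v ∈ Finset.Ico 2 (l+1),
      ((if v ≠ 1 ∧ brG l v ≠ 1 ∧ brAdj (l+1) (brG l) v 1 then 1 else 0) +
       (if v ≠ 1 ∧ brG l v ≠ 1 ∧ brAdj (l+1) (brG l) (brG l v) 1 then 1 else 0)) = 0 := by
    apply Finset.sum_eq_zero
    intro v hv
    rw [Finset.mem_Ico] at hv
    have hGv : brG l v = 1 := by
      unfold brG
      rw [if_neg (by omega), if_pos (by omega)]
    rw [if_neg (fun h => h.2.1 hGv), if_neg (fun h => h.2.1 hGv)]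
    norm_num
  rw [hterm0, hterm1, hsum]
  norm_num

lemma ncount_star (l : ℕ) (hl : 1 ≤ l) : brNcount (l+1) l 2 (brG l) = 1 := by
  unfold brNcount
  have : (Finset.range (l+1)).filter
      (fun t => brDeg (l+1) (brG l) t = l ∧ brD2 (l+1) (brG l) t = 2 ∧ brG l t ≠ t) = {1} := by
    apply Finset.Subset.antisymm
    · intro t ht
      rw [Finset.mem_filter, Finset.mem_range] at ht
      obtain ⟨h1, h2, h3, h4⟩ := ht
      rw [Finset.mem_singleton]
      exact (lemB hl (hleG l) h1 h4 h2).1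
    · intro t ht
      rw [Finset.mem_singleton] at ht
      subst ht
      rw [Finset.mem_filter, Finset.mem_range]
      refine ⟨by omega, degG1 l hl, d2G1 l hl, ?_⟩
      unfold brG; simp
  rw [this]
  simp

lemma term_zero (l : ℕ) (hl : 1 ≤ l) (f : Fin (l+1) → Fin (l+1)) (hne : f ≠ brFstar l) :
    brProb (l+1) (brExt (l+1) f) * ((brNcount (l+1) l 2 (brExt (l+1) f) : ℕ) : ℝ) = 0 := by
  set g := brExt (l+1) f with hg
  by_cases hle : ∀ t, t < l + 1 → g t ≤ t
  · suffices h : brNcount (l+1) l 2 g = 0 by rw [h]; simp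
    by_contra hN
    have hne2 : ((Finset.range (l+1)).filter
        (fun t => brDeg (l+1) g t = l ∧ brD2 (l+1) g t = 2 ∧ g t ≠ t)).Nonempty := by
      rw [← Finset.card_pos]
      unfold brNcount at hN
      omega
    obtain ⟨t, ht⟩ := hne2
    rw [Finset.mem_filter, Finset.mem_range] at ht
    obtain ⟨h1, h2, h3, h4⟩ := ht
    obtain ⟨-, hg0, hg1, hgu⟩ := lemB hl hle h1 h4 h2
    apply hne
    funext u
    apply Fin.ext
    have hfu : (f u : ℕ) = g u.val := by
      rw [hg]
      unfold brExt
      rw [dif_pos u.isLt]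
    have hstar : ((brFstar l u : Fin (l+1)) : ℕ) = brG l u.val := rfl
    rw [hfu, hstar]
    have hu := u.isLt
    unfold brG
    split_ifs with ha hb
    · rcases Nat.lt_or_ge u.val 1 with h | h
      · have : u.val = 0 := by omega
        rw [this, hg0]
      · have : u.val = 1 := by omega
        rw [this, hg1]
    · exact hgu u.val (by omega) hu
    · omega
  · push_neg at hle
    obtain ⟨t, ht, hgt⟩ := hle
    have : brProb (l+1) g = 0 := by
      unfold brProb
      apply Finset.prod_eq_zero (Finset.mem_range.mpr ht)
      unfold brStepWeight
      rw [if_neg (by omega), if_neg (by omega)]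
      simp
    rw [this]
    simp

/-- For every `l ≥ 1`, `E[N_{l+1}(l,2)] = 2·(l−1)!/(2l+1)‼`, where `‼` is the double
factorial. -/
theorem expectation_N_extreme_case :
    ∀ l : ℕ, 1 ≤ l →
      EN (l + 1) l 2 =
        2 * ((l - 1).factorial : ℝ) / (Nat.doubleFactorial (2 * l + 1) : ℝ) := by
  intro l hl
  unfold EN brExpect
  rw [Finset.sum_eq_single_of_mem (brFstar l) (Finset.mem_univ _)
      (fun b _ hb => term_zero l hl b hb)]
  rw [brExt_brFstar, prob_star l hl, ncount_star l hl]
  norm_num
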